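/- Let (W,S) be a finite Coxeter system. If F is a saturated subset of P(S) (i.e., I ∈ F and I′ ⊆ I imply I′ ∈ F), then Σ_F(W) = ⊕_{I∈F} Q x_I is a left ideal of Σ(W), and the character of the left Σ(W)-module Σ_F(W) is Σ_{I∈F} τ_{λ(I)}. -/

import Mathlib

/-!
If `F` is saturated and `I ∈ F`, the congruence `x x_I ≡ τ_{λ(I)}(x) x_I` modulo the span of
the `x_K`, `K ⊊ I`, takes place inside `Σ_F(W)`. So `Σ_F(W)` is a left ideal, and on the family
`(x_I)_{I ∈ F}` left multiplication by `x` is triangular with diagonal `τ_{λ(I)}(x)`; this gives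
the trace once the `x_I` are known to be linearly independent.

The coefficient of `x_I` at `w` is `1` exactly when `I` contains no right descent of `w`, so
linear independence follows once every `K ⊆ S` is the right descent set of some `w`. Take `w` of
maximal length among the words in the letters `K`; every `i ∈ K` is a descent of `w`. A right
descent `s_i` of a word occurs in its right inversion sequence (Tits' sign representation), so
it lies in `W_K`. But `s_i ∉ W_K` for `i ∉ K`: in the geometric representation `W_K` acts
trivially modulo the span of the roots `α_k`, `k ∈ K`, while `s_i α_i = -α_i`.
-/

theorem mul_mul_inv_eq_iff_eq_inv_mul_mul {G : Type*} [Group G] {g u v : G} :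
    g * u * g⁻¹ = v ↔ u = g⁻¹ * v * g := by
  constructor <;> rintro rfl <;> group

open Polynomial.Chebyshev in
/-- These are the two coefficients in `Module.reflection_mul_reflection_pow_apply`. -/
theorem Polynomial.Chebyshev.S_eval_two_mul_cos_two_pi_div {m : ℕ} (hm : 3 ≤ m) {t : ℝ}
    (ht : t = 2 * Real.cos (2 * Real.pi / m)) :
    (S ℝ ((m - 2) / 2)).eval t *
        ((S ℝ ((m - 1) / 2)).eval t + (S ℝ ((m - 3) / 2)).eval t) = 0 ∧
      (S ℝ ((m - 1) / 2)).eval t *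
        ((S ℝ (m / 2)).eval t + (S ℝ ((m - 2) / 2)).eval t) = 0 := by
  set φ := 2 * Real.pi / m with hφ
  have hu (n : ℤ) : (S ℝ n).eval t * Real.sin φ = Real.sin ((n + 1) * φ) := by
    rw [ht]; exact S_two_mul_real_cos ..
  have hsin : Real.sin φ ≠ 0 := by
    have hmR : (3 : ℝ) ≤ m := by exact_mod_cast hm
    refine (Real.sin_pos_of_pos_of_lt_pi (by positivity) ?_).ne'
    rw [hφ, div_lt_iff₀ (by positivity)]
    nlinarith [Real.pi_pos]
  obtain ⟨k, rfl | rfl⟩ := Nat.even_or_odd' m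
  · have hk : (S ℝ (k - 1)).eval t = 0 := by
      refine (mul_eq_zero.mp ((hu _).trans ?_)).resolve_right hsin
      have hk0 : (k : ℝ) ≠ 0 := by norm_cast; omega
      rw [← Real.sin_pi]
      congr 1
      rw [hφ]
      push_cast
      field_simp
      ring
    have h1 : (2 * k - 2 : ℤ) / 2 = k - 1 := by omega
    have h2 : (2 * k - 1 : ℤ) / 2 = k - 1 := by omega
    push_cast
    simp [h1, h2, hk]
  · have hk : (S ℝ k).eval t + (S ℝ (k - 1)).eval t = 0 := by
      refine (mul_eq_zero.mp ((add_mul _ _ _).trans ?_)).resolve_right hsin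
      rw [hu, hu, Int.cast_sub, Int.cast_one, sub_add_cancel, Int.cast_natCast,
        show ((k : ℝ) + 1) * φ = 2 * Real.pi - k * φ by rw [hφ]; push_cast; field_simp; ring,
        Real.sin_two_pi_sub, neg_add_cancel]
    have h1 : (2 * k + 1 - 2 : ℤ) / 2 = k - 1 := by omega
    have h3 : (2 * k + 1 - 3 : ℤ) / 2 = k - 1 := by omega
    have h4 : (2 * k + 1 : ℤ) / 2 = k := by omega
    push_cast
    simp [h1, h3, h4, hk]

open Polynomial.Chebyshev in
theorem Module.reflection_mul_reflection_pow_eq_one {V : Type*} [AddCommGroup V] [Module ℝ V]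
    {x y : V} {f g : Module.Dual ℝ V} (hf : f x = 2) (hg : g y = 2) {m : ℕ} (hm : 2 ≤ m)
    (hfy : f y = -2 * Real.cos (Real.pi / m)) (hgx : g x = -2 * Real.cos (Real.pi / m)) :
    (Module.reflection hf * Module.reflection hg) ^ m = 1 := by
  have ht : 2 * Real.cos (2 * Real.pi / m) = f y * g x - 2 := by
    rw [hfy, hgx, mul_div_assoc, Real.cos_two_mul]; ring
  ext z : 1
  rw [Module.reflection_mul_reflection_pow_apply hf hg m z _ ht, LinearEquiv.coe_one, id]
  rcases hm.eq_or_lt with rfl | hm3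
  · -- the coefficients do not vanish, but `f y = g x = 0` makes the terms cancel
    have h0 : f y = 0 ∧ g x = 0 := by norm_num [hfy, hgx]
    norm_num [h0, S_zero, S_one, S_neg_one]
    module
  · obtain ⟨h1, h2⟩ := S_eval_two_mul_cos_two_pi_div hm3 rfl
    rw [h1, h2, zero_smul, zero_smul, add_zero, add_zero]

open Submodule in
theorem LinearMap.trace_restrict_eq_sum_of_sub_mem_span {R V ι : Type*} [CommRing R]
    [AddCommGroup V] [Module R V] {e : ι → V} (he : LinearIndependent R e) {s : Finset ι}
    (f : V →ₗ[R] V) (c : ι → R)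
    (hc : ∀ i ∈ s, f (e i) - c i • e i ∈ span R (e '' (↑s \ {i})))
    (hf : ∀ v ∈ span R (e '' s), f v ∈ span R (e '' s)) :
    trace R _ (f.restrict hf) = ∑ i ∈ s, c i := by
  classical
  set p := span R (e '' s)
  have hspan : span R (Set.range fun i : s => e i) = p := by
    congr 1; ext v; simp
  let b : Module.Basis s R p :=
    (Module.Basis.span (he.comp _ Subtype.val_injective)).map (LinearEquiv.ofEq _ _ hspan)
  have hb (i : s) : (b i : V) = e i := by simp [b]
  rw [trace_eq_matrix_trace R b, Matrix.trace, ← Finset.sum_coe_sort s]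
  refine Finset.sum_congr rfl fun i _ => ?_
  have hrest : f.restrict hf (b i) - c i • b i ∈ span R (b '' {j | j ≠ i}) := by
    rw [← apply_mem_span_image_iff_mem_span p.injective_subtype, ← Set.image_comp,
      show ⇑p.subtype ∘ ⇑b = fun j : s => e j from funext hb]
    convert hc i i.2 using 3
    · ext v
      constructor
      · rintro ⟨j, hj, rfl⟩
        exact ⟨j, ⟨j.2, fun h => hj (Subtype.ext h)⟩, rfl⟩
      · rintro ⟨j, ⟨hjs, hji⟩, rfl⟩
        exact ⟨⟨j, hjs⟩, fun h => hji (congrArg Subtype.val h), rfl⟩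
    · simp [hb]
  have hcoord : b.repr (f.restrict hf (b i) - c i • b i) i = 0 :=
    Finsupp.notMem_support_iff.mp fun hi => b.mem_span_image.mp hrest hi rfl
  rw [Matrix.diag_apply, toMatrix_apply]
  simpa [sub_eq_zero] using hcoord

namespace CoxeterMatrix

variable {B : Type*} [DecidableEq B] [Fintype B] (M : CoxeterMatrix B)

/-- The form `v ↦ 2 B(α_i, v)` for the bilinear form `B(α_i, α_j) = -cos (π / m_ij)` of the
geometric representation. For `m_ij = 0`, i.e. `m_ij = ∞`, the junk value `π / 0 = 0` gives the
usual `B(α_i, α_j) = -1`. -/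
noncomputable def coroot (i : B) : Module.Dual ℝ (B → ℝ) :=
  ∑ j, (-2 * Real.cos (Real.pi / M i j)) • LinearMap.proj j

theorem coroot_single (i j : B) :
    M.coroot i (Pi.single j 1) = -2 * Real.cos (Real.pi / M i j) := by
  simp [coroot, Pi.single_apply]

theorem coroot_single_self (i : B) : M.coroot i (Pi.single i 1) = 2 := by
  simp [coroot_single]

noncomputable def geometricReflection (i : B) : (B → ℝ) ≃ₗ[ℝ] (B → ℝ) :=
  Module.reflection (M.coroot_single_self i)

theorem isLiftable_geometricReflection : M.IsLiftable M.geometricReflection := by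
  intro i j
  rcases eq_or_ne i j with rfl | hij
  · ext v : 1
    simp [geometricReflection, Module.involutive_reflection _ v]
  rcases Nat.eq_zero_or_pos (M i j) with hm | hm
  · rw [hm, pow_zero]
  exact Module.reflection_mul_reflection_pow_eq_one _ _
    (by have := M.off_diagonal i j hij; omega) (M.coroot_single i j)
    (by rw [coroot_single, M.symmetric])

end CoxeterMatrix

namespace CoxeterSystem

variable {B W : Type*} [Group W] {M : CoxeterMatrix B} (cs : CoxeterSystem M W)

local prefix:100 "s" => cs.simple
local prefix:100 "π" => cs.wordProd
local prefix:100 "ℓ" => cs.length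
local prefix:100 "ris" => cs.rightInvSeq

section Geometric

variable [DecidableEq B] [Fintype B]

noncomputable def geometricRep : W →* (B → ℝ) ≃ₗ[ℝ] (B → ℝ) :=
  cs.lift ⟨M.geometricReflection, M.isLiftable_geometricReflection⟩

theorem geometricRep_simple (i : B) : cs.geometricRep (s i) = M.geometricReflection i :=
  cs.lift_apply_simple _ i

theorem geometricRep_wordProd_sub_mem_span {K : Set B} {ω : List B} (hω : ∀ b ∈ ω, b ∈ K)
    (v : B → ℝ) :
    cs.geometricRep (π ω) v - v ∈
      Submodule.span ℝ ((fun k => Pi.single k (1 : ℝ)) '' K) := by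
  induction ω with
  | nil => simp
  | cons i ω ih =>
    rw [wordProd_cons, map_mul, LinearEquiv.mul_apply, geometricRep_simple,
      CoxeterMatrix.geometricReflection, Module.reflection_apply, sub_right_comm]
    exact sub_mem (ih fun b hb => hω b (List.mem_cons_of_mem i hb))
      (Submodule.smul_mem _ _ (Submodule.subset_span ⟨i, hω i List.mem_cons_self, rfl⟩))

end Geometric

theorem mem_of_wordProd_eq_simple [Fintype B] {K : Set B} {ω : List B}
    (hω : ∀ b ∈ ω, b ∈ K) {i : B} (h : π ω = s i) : i ∈ K := by
  classical
  by_contra hi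
  have hmem := cs.geometricRep_wordProd_sub_mem_span hω (Pi.single i 1)
  rw [h, geometricRep_simple, CoxeterMatrix.geometricReflection,
    Module.reflection_apply_self] at hmem
  have hker : Submodule.span ℝ ((fun k => Pi.single k (1 : ℝ)) '' K) ≤
      LinearMap.ker (LinearMap.proj i) := by
    refine Submodule.span_le.mpr ?_
    rintro _ ⟨k, hk, rfl⟩
    simp [ne_of_mem_of_not_mem hk hi]
  have := hker hmem
  norm_num at this

theorem simple_mul_pow_mul_simple (i j : B) (k : ℕ) :
    s j * (s i * s j) ^ k * s j = ((s i * s j) ^ k)⁻¹ := by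
  have h : s j * (s i * s j) * (s j)⁻¹ = (s i * s j)⁻¹ := by
    simp [mul_assoc, cs.inv_simple, cs.simple_mul_simple_self]
  rw [← inv_pow, ← h, conj_pow, cs.inv_simple]

section Sign

variable [DecidableEq W]

/-- Tits' sign representation, acting on pairs (reflection, sign). -/
def signPerm (i : B) : Equiv.Perm (W × ℤˣ) :=
  Function.Involutive.toPerm (fun p => (s i * p.1 * s i, if p.1 = s i then -p.2 else p.2)) <| by
    rintro ⟨t, ε⟩
    have hconj : s i * (s i * t * s i) * s i = t := by
      simp only [← mul_assoc, cs.simple_mul_simple_self, one_mul,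
        cs.simple_mul_simple_cancel_right]
    have hfix : s i * t * s i = s i ↔ t = s i := by
      constructor
      · intro h; rw [← hconj, h, cs.simple_mul_simple_self, one_mul]
      · rintro rfl; rw [cs.simple_mul_simple_self, one_mul]
    by_cases ht : t = s i <;> simp [hconj, hfix, ht]

theorem signPerm_apply (i : B) (t : W) (ε : ℤˣ) :
    cs.signPerm i (t, ε) = (s i * t * s i, if t = s i then -ε else ε) := rfl

theorem signPerm_mul_signPerm_pow_apply (i j : B) (r : ℕ) (t : W) (ε : ℤˣ) :
    ((cs.signPerm i * cs.signPerm j) ^ r) (t, ε) =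
      ((s i * s j) ^ r * t * ((s i * s j) ^ r)⁻¹,
        (∏ n ∈ Finset.range (2 * r),
          if t = ((s i * s j) ^ n)⁻¹ * s j then -1 else 1) * ε) := by
  have hconj (n : ℕ) : s j * (s i * s j) ^ n = ((s i * s j) ^ n)⁻¹ * s j := by
    rw [← cs.simple_mul_pow_mul_simple i j n, cs.simple_mul_simple_cancel_right]
  set a := s i * s j with ha
  have hfix_j (r : ℕ) : a ^ r * t * (a ^ r)⁻¹ = s j ↔ t = (a ^ (2 * r))⁻¹ * s j := by
    rw [mul_mul_inv_eq_iff_eq_inv_mul_mul, mul_assoc, hconj, ← mul_assoc, ← mul_inv_rev,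
      ← pow_add, ← two_mul]
  have hfix_i (r : ℕ) : s j * (a ^ r * t * (a ^ r)⁻¹) * s j = s i ↔
      t = (a ^ (2 * r + 1))⁻¹ * s j := by
    have hsis : s j * s i * s j = a⁻¹ * s j := by
      rw [ha, mul_inv_rev, cs.inv_simple, cs.inv_simple]
    have h : (a ^ r)⁻¹ * (a⁻¹ * s j) * a ^ r = (a ^ (2 * r + 1))⁻¹ * s j := by
      rw [mul_assoc, mul_assoc, hconj]; group
    have hflip (u v : W) : s j * u * s j = v ↔ u = s j * v * s j := by
      simpa only [cs.inv_simple] using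
        mul_mul_inv_eq_iff_eq_inv_mul_mul (g := s j) (u := u) (v := v)
    rw [hflip, mul_mul_inv_eq_iff_eq_inv_mul_mul, hsis, h]
  induction r with
  | zero => simp
  | succ r ih =>
    rw [pow_succ', Equiv.Perm.mul_apply, ih, Equiv.Perm.mul_apply, signPerm_apply, signPerm_apply,
      show 2 * (r + 1) = 2 * r + 1 + 1 by ring, Finset.prod_range_succ, Finset.prod_range_succ]
    simp only [hfix_j, hfix_i]
    refine Prod.ext ?_ ?_
    · simp only [ha, pow_succ', mul_inv_rev, cs.inv_simple, mul_assoc]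
    · split_ifs <;> simp [mul_comm]

theorem isLiftable_signPerm : M.IsLiftable cs.signPerm := by
  intro i j
  ext ⟨t, ε⟩ : 1
  rw [signPerm_mul_signPerm_pow_apply, cs.simple_mul_simple_pow, two_mul, Finset.prod_range_add]
  simp only [pow_add, cs.simple_mul_simple_pow, one_mul, inv_one, mul_one, ← pow_two,
    Int.units_sq, Equiv.Perm.one_apply]

noncomputable def signRep : W →* Equiv.Perm (W × ℤˣ) :=
  cs.lift ⟨cs.signPerm, cs.isLiftable_signPerm⟩

theorem signRep_wordProd_apply (ω : List B) (t : W) (ε : ℤˣ) :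
    cs.signRep (π ω) (t, ε) = (π ω * t * (π ω)⁻¹, (-1) ^ (ris ω).count t * ε) := by
  induction ω generalizing t ε with
  | nil => simp
  | cons i ω ih =>
    rw [wordProd_cons, map_mul, Equiv.Perm.mul_apply, ih, signRep, lift_apply_simple,
      signPerm_apply, rightInvSeq, List.count_cons]
    have hfix : π ω * t * (π ω)⁻¹ = s i ↔ (π ω)⁻¹ * s i * π ω = t := by
      rw [mul_mul_inv_eq_iff_eq_inv_mul_mul, eq_comm]
    refine Prod.ext (by simp only [mul_inv_rev, cs.inv_simple]; group) ?_
    by_cases h : (π ω)⁻¹ * s i * π ω = t <;> simp [hfix, h, pow_succ]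

theorem neg_one_pow_count_rightInvSeq_eq {ω ω' : List B} (h : π ω = π ω') (t : W) :
    (-1 : ℤˣ) ^ (ris ω).count t = (-1) ^ (ris ω').count t := by
  simpa [signRep_wordProd_apply] using congrArg (fun w => (cs.signRep w (t, 1)).2) h

end Sign

theorem simple_mem_rightInvSeq_of_isRightDescent {ω : List B} {i : B}
    (h : cs.IsRightDescent (π ω) i) : s i ∈ ris ω := by
  classical
  obtain ⟨ω', hred, hω'⟩ := cs.exists_isReduced (π ω * s i)
  have hω : π ω = π (ω'.concat i) := by
    rw [wordProd_concat, ← hω', cs.simple_mul_simple_cancel_right]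
  have hcount : (ris ω').count (s i) = 0 := List.count_eq_zero.mpr fun hmem => by
    have := (cs.isRightInversion_of_mem_rightInvSeq hred hmem).2
    rw [← hω', cs.simple_mul_simple_cancel_right] at this
    exact lt_asymm h this
  have hcount' : (ris (ω'.concat i)).count (s i) = 1 := by
    have hmap := List.count_map_of_injective (ris ω') _ (MulAut.conj (s i)).injective (s i)
    rw [MulAut.conj_apply, mul_inv_cancel_right, hcount] at hmap
    rw [rightInvSeq_concat, List.count_concat_self, hmap]
  refine List.count_pos_iff.mp (Nat.pos_of_ne_zero fun h0 => ?_)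
  have := cs.neg_one_pow_count_rightInvSeq_eq hω (s i)
  rw [h0, hcount', pow_zero, pow_one] at this
  exact absurd this (by decide)

theorem exists_wordProd_eq_of_mem_rightInvSeq {ω : List B} {t : W} (ht : t ∈ ris ω) :
    ∃ ω' : List B, (∀ b ∈ ω', b ∈ ω) ∧ π ω' = t := by
  induction ω with
  | nil => simp at ht
  | cons i ω ih =>
    rcases List.mem_cons.mp ht with rfl | ht
    · refine ⟨ω.reverse ++ i :: ω, fun b hb => ?_, ?_⟩
      · simp only [List.mem_append, List.mem_reverse, List.mem_cons] at hb ⊢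
        tauto
      · rw [wordProd_append, wordProd_reverse, wordProd_cons, mul_assoc]
    · obtain ⟨ω', hω', rfl⟩ := ih ht
      exact ⟨ω', fun b hb => List.mem_cons_of_mem i (hω' b hb), rfl⟩

theorem mem_of_isRightDescent_wordProd [Fintype B] {K : Set B} {ω : List B}
    (hω : ∀ b ∈ ω, b ∈ K) {i : B} (h : cs.IsRightDescent (π ω) i) : i ∈ K := by
  obtain ⟨ω', hω', heq⟩ :=
    cs.exists_wordProd_eq_of_mem_rightInvSeq (cs.simple_mem_rightInvSeq_of_isRightDescent h)
  exact cs.mem_of_wordProd_eq_simple (fun b hb => hω b (hω' b hb)) heq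

theorem exists_forall_isRightDescent_iff [Fintype B] [Fintype W] (K : Set B) :
    ∃ w : W, ∀ i, cs.IsRightDescent w i ↔ i ∈ K := by
  classical
  obtain ⟨_, hw, hmax⟩ := Finset.exists_max_image
    (Finset.univ.filter fun w => ∃ ω : List B, (∀ b ∈ ω, b ∈ K) ∧ π ω = w) cs.length
    ⟨1, by simpa using ⟨[], by simp, rfl⟩⟩
  obtain ⟨ω, hω, rfl⟩ := (Finset.mem_filter.mp hw).2
  refine ⟨π ω, fun i => ⟨cs.mem_of_isRightDescent_wordProd hω, fun hi => ?_⟩⟩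
  have hle := hmax (π ω * s i) (Finset.mem_filter.mpr ⟨Finset.mem_univ _, ω ++ [i],
    by simpa [or_imp, forall_and] using ⟨hω, hi⟩,
    by rw [wordProd_append, wordProd_singleton]⟩)
  exact lt_of_le_of_ne hle (cs.length_mul_simple_ne _ i)

end CoxeterSystem

open MonoidAlgebra

variable {B W : Type*} [DecidableEq B] [Fintype B] [Group W] [Fintype W] [DecidableEq W]

/-- `x_I`: the sum, in the group algebra `ℚW`, of the minimal length coset
representatives of the standard parabolic subgroup `W_I` in `W`, i.e. the sum of the
`w ∈ W` such that `ws > w` for all `s ∈ I`. -/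
noncomputable def descentBasis {M : CoxeterMatrix B} (cs : CoxeterSystem M W)
    (I : Finset B) : MonoidAlgebra ℚ W :=
  ∑ w : W, if ∀ i ∈ I, cs.length w < cs.length (w * cs.simple i)
    then MonoidAlgebra.single w (1 : ℚ) else 0

/-- `A` is the Solomon descent algebra `Σ(W)` of `(W,S)`: a subalgebra of the group
algebra `ℚW` whose underlying set is the span of the elements `x_I`, `I ⊆ S`.
(By Solomon's theorem this span is indeed closed under multiplication.) -/
def IsDescentAlgebra {M : CoxeterMatrix B} (cs : CoxeterSystem M W)
    (A : Subalgebra ℚ (MonoidAlgebra ℚ W)) : Prop :=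
  (A : Set (MonoidAlgebra ℚ W)) = Submodule.span ℚ (Set.range (descentBasis cs))

/-- The standard parabolic subgroup `W_I` generated by the simple reflections in `I`. -/
def parabolic {M : CoxeterMatrix B} (cs : CoxeterSystem M W) (I : Finset B) : Subgroup W :=
  Subgroup.closure (cs.simple '' I)

omit [DecidableEq W] in
theorem coeff_descentBasis {M : CoxeterMatrix B} (cs : CoxeterSystem M W) (I : Finset B) (w : W) :
    (descentBasis cs I).coeff w =
      if ∀ i ∈ I, cs.length w < cs.length (w * cs.simple i) then 1 else 0 := by
  rw [descentBasis, MonoidAlgebra.coeff_sum, Finsupp.finsetSum_apply,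
    Finset.sum_eq_single w (fun v _ hv => by split_ifs <;> simp [hv]) (by simp)]
  split_ifs <;> simp

omit [DecidableEq W] in
theorem linearIndependent_descentBasis {M : CoxeterMatrix B} (cs : CoxeterSystem M W) :
    LinearIndependent ℚ (descentBasis cs) := by
  rw [Fintype.linearIndependent_iff]
  intro g hg I
  induction I using Finset.strongInduction with
  | H I ih =>
  obtain ⟨w, hw⟩ := cs.exists_forall_isRightDescent_iff (↑Iᶜ : Set B)
  have hascent (J : Finset B) :
      (∀ j ∈ J, cs.length w < cs.length (w * cs.simple j)) ↔ J ⊆ I := by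
    refine forall₂_congr fun j _ => ?_
    rw [← (cs.length_mul_simple_ne w j).symm.le_iff_lt, ← not_lt]
    exact (hw j).not.trans (by simp)
  have hcoeff := congrArg (fun a => (MonoidAlgebra.coeff a) w) hg
  simp only [MonoidAlgebra.coeff_sum, Finsupp.finsetSum_apply, MonoidAlgebra.coeff_smul,
    Finsupp.smul_apply, coeff_descentBasis, hascent, smul_eq_mul, MonoidAlgebra.coeff_zero,
    Finsupp.coe_zero, Pi.zero_apply] at hcoeff
  rwa [Finset.sum_eq_single I (fun J _ hJ => ?_) (by simp), if_pos subset_rfl, mul_one] at hcoeff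
  split_ifs with hJI
  · rw [ih J (Finset.ssubset_iff_subset_ne.mpr ⟨hJI, hJ⟩), zero_mul]
  · rw [mul_zero]

theorem saturated_leftIdeal_character_general {M : CoxeterMatrix B}
    (cs : CoxeterSystem M W) (A : Subalgebra ℚ (MonoidAlgebra ℚ W))
    (t : Finset B → MonoidAlgebra ℚ W → ℚ)
    (ht : ∀ (J : Finset B), ∀ x ∈ A,
      x * descentBasis cs J - (t J x) • descentBasis cs J ∈
        Submodule.span ℚ (descentBasis cs '' {K | K ⊂ J}))
    (F : Finset (Finset B)) (hF : ∀ I ∈ F, ∀ I' ⊆ I, I' ∈ F) :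
    (∀ x ∈ A, ∀ y ∈ Submodule.span ℚ (descentBasis cs '' (F : Set (Finset B))),
        x * y ∈ Submodule.span ℚ (descentBasis cs '' (F : Set (Finset B)))) ∧
    (∀ x, ∀ _ : x ∈ A,
      ∀ h : ∀ y ∈ Submodule.span ℚ (descentBasis cs '' (F : Set (Finset B))),
        (LinearMap.mulLeft ℚ x) y ∈
          Submodule.span ℚ (descentBasis cs '' (F : Set (Finset B))),
      LinearMap.trace ℚ _ ((LinearMap.mulLeft ℚ x).restrict h) = ∑ I ∈ F, t I x) := by
  set V := Submodule.span ℚ (descentBasis cs '' (F : Set (Finset B)))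
  have hlower : ∀ x ∈ A, ∀ I ∈ F, x * descentBasis cs I - t I x • descentBasis cs I ∈
      Submodule.span ℚ (descentBasis cs '' (↑F \ {I})) := fun x hx I hI =>
    Submodule.span_mono (Set.image_mono fun K (hK : K ⊂ I) =>
      show K ∈ (↑F \ {I} : Set (Finset B)) from ⟨hF I hI K hK.subset, hK.ne⟩) (ht I x hx)
  have hideal : ∀ x ∈ A, ∀ y ∈ V, x * y ∈ V := by
    intro x hx y hy
    refine (Submodule.span_le.mpr ?_ : V ≤ V.comap (LinearMap.mulLeft ℚ x)) hy
    rintro _ ⟨I, hI, rfl⟩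
    simpa using add_mem (Submodule.span_mono (Set.image_mono Set.sdiff_subset) (hlower x hx I hI))
      (Submodule.smul_mem _ (t I x) (Submodule.subset_span ⟨I, hI, rfl⟩))
  exact ⟨hideal, fun x hx h => LinearMap.trace_restrict_eq_sum_of_sub_mem_span
    (linearIndependent_descentBasis cs) _ _ (hlower x hx) h⟩

set_option synthInstance.maxHeartbeats 1000000 in
set_option maxHeartbeats 1000000 in
/-- If `F` is a saturated family of subsets of `S` (closed under taking subsets), then
`Σ_F(W) = span{x_I : I ∈ F}` is a left ideal of the descent algebra `Σ(W)`, and the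
character of the left `Σ(W)`-module `Σ_F(W)` is `Σ_{I ∈ F} τ_{λ(I)}`: for `x ∈ Σ(W)`,
the trace of left multiplication by `x` on `Σ_F(W)` equals `Σ_{I ∈ F} τ_{λ(I)}(x)`,
where `τ_{λ(J)}` is characterized by `x·x_J ≡ τ_{λ(J)}(x)·x_J` modulo the span of the
`x_K` with `K ⊊ J`. -/
theorem saturated_leftIdeal_character {M : CoxeterMatrix B}
    (cs : CoxeterSystem M W) (A : Subalgebra ℚ (MonoidAlgebra ℚ W))
    (hA : IsDescentAlgebra cs A)
    (t : Finset B → MonoidAlgebra ℚ W → ℚ)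
    (ht : ∀ (J : Finset B), ∀ x ∈ A,
      x * descentBasis cs J - (t J x) • descentBasis cs J ∈
        Submodule.span ℚ (descentBasis cs '' {K | K ⊂ J}))
    (F : Finset (Finset B)) (hF : ∀ I ∈ F, ∀ I' ⊆ I, I' ∈ F) :
    (∀ x ∈ A, ∀ y ∈ Submodule.span ℚ (descentBasis cs '' (F : Set (Finset B))),
        x * y ∈ Submodule.span ℚ (descentBasis cs '' (F : Set (Finset B)))) ∧
    (∀ x, ∀ _ : x ∈ A,
      ∀ h : ∀ y ∈ Submodule.span ℚ (descentBasis cs '' (F : Set (Finset B))),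
        (LinearMap.mulLeft ℚ x) y ∈
          Submodule.span ℚ (descentBasis cs '' (F : Set (Finset B))),
      LinearMap.trace ℚ _ ((LinearMap.mulLeft ℚ x).restrict h) = ∑ I ∈ F, t I x) :=
  saturated_leftIdeal_character_general cs A t ht F hF
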